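/- arXiv:1605.09124 — 4 statements merged into one kernel-verified Lean document; each statement's English description precedes it below -/
import Mathlib

section
/- There exists a universal constant c > 0 such that for every odd integer S ≥ 3, every real u ≥ 2, and all integers m ≥ 5 and n ≥ 16·u, under the Poisson sampling model every estimator D̂ satisfies sup_{(P,Q)∈U_{S,u}} E[(D̂ − D(P‖Q))²] ≥ c·((ln u)²/m + u/n); that is, the Poisson-model minimax risk over U_{S,u} is at least c·((ln u)²/m + u/n). -/
/-!
Le Cam's two-point method. If `f₁, f₂` are probability mass functions with affinity
`∑ √(f₁ f₂) ≥ a`, then for every estimator the two squared-error risks of targets `T₁, T₂` add up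
to at least `a² (T₁ - T₂)² / 2`; this follows by summing a pointwise AM–GM inequality. For
independent Poisson counts the affinity factorises coordinatewise and equals
`exp (-(m H(P₁, P₂) + n H(Q₁, Q₂)) / 2)` with `H(P, Q) = ∑ (√pᵢ - √qᵢ)²`. It therefore suffices
to find two pairs in `U_{S,u}` with `m H + n H ≤ 1` whose divergences are far apart:
* swapping mass `1/4 ± t`, `t² = 1/(16 m)`, between two atoms on which `Q` has ratio `2 (u - 1)`
  leaves the entropy of `P` unchanged and moves `D(P‖Q)` by `2 t log (2 (u - 1)) ≥ 2 t log u`;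
* for a point mass `P`, scaling its `Q`-mass `1/u` by `1 + x`, `x² = u/(2 n)`, moves
  `D(P‖Q) = log (u / (1 + x))` by `log (1 + x) ≥ x / 2`.
Both pairs live on three, respectively two, atoms and are extended by zero to `Fin S`.
-/

open scoped BigOperators ENNReal

noncomputable section

/-- `P` is a probability vector on `Fin S`. -/
def IsProbVec {S : ℕ} (P : Fin S → ℝ) : Prop :=
  (∀ i, 0 ≤ P i) ∧ ∑ i, P i = 1

/-- `(P, Q)` lies in `U_{S,u}`: both probability vectors, with likelihood ratio `≤ u`. -/
def MemU {S : ℕ} (u : ℝ) (P Q : Fin S → ℝ) : Prop :=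
  IsProbVec P ∧ IsProbVec Q ∧ ∀ i, P i ≤ u * Q i

/-- KL divergence `∑ᵢ pᵢ ln (pᵢ/qᵢ)` (with `0 ln (0/q) = 0`; valid whenever `P ≪ Q`,
which holds on `U_{S,u}`). -/
def klDiv {S : ℕ} (P Q : Fin S → ℝ) : ℝ :=
  ∑ i, P i * Real.log (P i / Q i)

/-- Probability mass function of the Poisson distribution with rate `r`. -/
def poissonPMF (r : ℝ) (k : ℕ) : ℝ :=
  Real.exp (-r) * r ^ k / (Nat.factorial k : ℝ)

/-- Mean squared error of the estimator `est` of the target value `T` under the Poisson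
sampling model: the observation consists of mutually independent counts
`Xᵢ ~ Poi(lam · pᵢ)` and `Yᵢ ~ Poi(mu · qᵢ)`. -/
def poissonRisk (S : ℕ) (lam mu : ℝ) (P Q : Fin S → ℝ) (T : ℝ)
    (est : (Fin S → ℕ) → (Fin S → ℕ) → ℝ) : ℝ≥0∞ :=
  ∑' xy : (Fin S → ℕ) × (Fin S → ℕ),
    ENNReal.ofReal ((∏ i, poissonPMF (lam * P i) (xy.1 i)) *
      (∏ i, poissonPMF (mu * Q i) (xy.2 i)) *
      (est xy.1 xy.2 - T) ^ 2)

open Real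

theorem ENNReal.tsum_prod_mul {α β : Type*} (f : α → ℝ≥0∞) (g : β → ℝ≥0∞) :
    ∑' z : α × β, f z.1 * g z.2 = (∑' a, f a) * ∑' b, g b := by
  rw [ENNReal.tsum_prod']
  simp_rw [ENNReal.tsum_mul_left, ENNReal.tsum_mul_right]

theorem ENNReal.tsum_pi_prod {α : Type*} :
    ∀ {n : ℕ} (g : Fin n → α → ℝ≥0∞),
      ∑' x : Fin n → α, ∏ i, g i (x i) = ∏ i, ∑' a, g i a
  | 0, g => by simp
  | n + 1, g => by
    rw [← (Fin.consEquiv fun _ => α).tsum_eq]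
    simp only [Fin.consEquiv_apply, Fin.prod_univ_succ, Fin.cons_zero, Fin.cons_succ]
    rw [ENNReal.tsum_prod_mul (g 0) (fun x : Fin n → α => ∏ i, g i.succ (x i)),
      ENNReal.tsum_pi_prod]

lemma sq_sqrt_sub_sqrt_le {a b : ℝ} (ha : 0 ≤ a) (hb : 0 ≤ b) :
    (√a - √b) ^ 2 ≤ (a - b) ^ 2 / (a + b) := by
  obtain ⟨x, hx, rfl⟩ : ∃ x, 0 ≤ x ∧ a = x ^ 2 := ⟨√a, sqrt_nonneg a, (sq_sqrt ha).symm⟩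
  obtain ⟨y, hy, rfl⟩ : ∃ y, 0 ≤ y ∧ b = y ^ 2 := ⟨√b, sqrt_nonneg b, (sq_sqrt hb).symm⟩
  rw [sqrt_sq hx, sqrt_sq hy]
  rcases (add_nonneg (sq_nonneg x) (sq_nonneg y)).eq_or_lt with h | h
  · obtain rfl : x = 0 := by nlinarith
    obtain rfl : y = 0 := by nlinarith
    simp
  · rw [le_div_iff₀ h]
    nlinarith [mul_nonneg (mul_nonneg hx hy) (sq_nonneg (x - y))]

lemma poissonPMF_nonneg {r : ℝ} (hr : 0 ≤ r) (k : ℕ) : 0 ≤ poissonPMF r k := by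
  unfold poissonPMF; positivity

lemma tsum_ofReal_poissonPMF {r : ℝ} (hr : 0 ≤ r) :
    ∑' k, ENNReal.ofReal (poissonPMF r k) = 1 := by
  have h := ProbabilityTheory.hasSum_one_poissonMeasure r.toNNReal
  rw [Real.coe_toNNReal r hr] at h
  rw [← ENNReal.ofReal_tsum_of_nonneg (poissonPMF_nonneg hr) h.summable]
  exact congrArg ENNReal.ofReal h.tsum_eq |>.trans ENNReal.ofReal_one

lemma sqrt_poissonPMF_mul_poissonPMF {a b : ℝ} (ha : 0 ≤ a) (hb : 0 ≤ b) (k : ℕ) :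
    √(poissonPMF a k * poissonPMF b k) =
      exp (-(√a - √b) ^ 2 / 2) * poissonPMF (√a * √b) k := by
  obtain ⟨x, hx, rfl⟩ : ∃ x, 0 ≤ x ∧ a = x ^ 2 := ⟨√a, sqrt_nonneg a, (sq_sqrt ha).symm⟩
  obtain ⟨y, hy, rfl⟩ : ∃ y, 0 ≤ y ∧ b = y ^ 2 := ⟨√b, sqrt_nonneg b, (sq_sqrt hb).symm⟩
  have hnonneg : 0 ≤ exp (-(x - y) ^ 2 / 2) * poissonPMF (x * y) k := by
    unfold poissonPMF; positivity
  rw [sqrt_sq hx, sqrt_sq hy, ← sqrt_sq hnonneg]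
  congr 1
  have hexp : exp (-(x - y) ^ 2 / 2) ^ 2 * exp (-(x * y)) ^ 2 = exp (-x ^ 2) * exp (-y ^ 2) := by
    simp only [← exp_nat_mul, ← exp_add]; congr 1; push_cast; ring
  unfold poissonPMF
  calc _ = exp (-x ^ 2) * exp (-y ^ 2) * ((x * y) ^ k) ^ 2 / ((k.factorial : ℝ) ^ 2) := by ring
    _ = _ := by rw [← hexp]; ring

lemma tsum_ofReal_sqrt_poissonPMF_mul {a b : ℝ} (ha : 0 ≤ a) (hb : 0 ≤ b) :
    ∑' k, ENNReal.ofReal √(poissonPMF a k * poissonPMF b k) =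
      ENNReal.ofReal (exp (-(√a - √b) ^ 2 / 2)) := by
  simp_rw [sqrt_poissonPMF_mul_poissonPMF ha hb, ENNReal.ofReal_mul (exp_pos _).le]
  rw [ENNReal.tsum_mul_left, tsum_ofReal_poissonPMF (by positivity), mul_one]

/-- Without the usual factor `1 / 2`: twice the squared Hellinger distance. -/
def sqHellinger {S : ℕ} (P Q : Fin S → ℝ) : ℝ := ∑ i, (√(P i) - √(Q i)) ^ 2

lemma sqHellinger_self {S : ℕ} (P : Fin S → ℝ) : sqHellinger P P = 0 := by
  simp [sqHellinger]

lemma sqHellinger_const_mul {S : ℕ} {c : ℝ} (hc : 0 ≤ c) (P Q : Fin S → ℝ) :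
    sqHellinger (fun i => c * P i) (fun i => c * Q i) = c * sqHellinger P Q := by
  simp_rw [sqHellinger, Finset.mul_sum, sqrt_mul hc, ← mul_sub, mul_pow, sq_sqrt hc]

def poissonProdPMF {S : ℕ} (r : Fin S → ℝ) (x : Fin S → ℕ) : ℝ :=
  ∏ i, poissonPMF (r i) (x i)

def poissonPairPMF {S : ℕ} (r s : Fin S → ℝ) (z : (Fin S → ℕ) × (Fin S → ℕ)) : ℝ :=
  poissonProdPMF r z.1 * poissonProdPMF s z.2

section PoissonProduct

variable {S : ℕ} {r r' s s' : Fin S → ℝ}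

lemma poissonProdPMF_nonneg (hr : ∀ i, 0 ≤ r i) (x : Fin S → ℕ) :
    0 ≤ poissonProdPMF r x :=
  Finset.prod_nonneg fun i _ => poissonPMF_nonneg (hr i) _

lemma poissonPairPMF_nonneg (hr : ∀ i, 0 ≤ r i) (hs : ∀ i, 0 ≤ s i)
    (z : (Fin S → ℕ) × (Fin S → ℕ)) : 0 ≤ poissonPairPMF r s z :=
  mul_nonneg (poissonProdPMF_nonneg hr z.1) (poissonProdPMF_nonneg hs z.2)

lemma tsum_ofReal_sqrt_poissonProdPMF_mul (hr : ∀ i, 0 ≤ r i) (hr' : ∀ i, 0 ≤ r' i) :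
    ∑' x, ENNReal.ofReal √(poissonProdPMF r x * poissonProdPMF r' x) =
      ENNReal.ofReal (exp (-sqHellinger r r' / 2)) := by
  have hnonneg i k : 0 ≤ poissonPMF (r i) k * poissonPMF (r' i) k :=
    mul_nonneg (poissonPMF_nonneg (hr i) k) (poissonPMF_nonneg (hr' i) k)
  simp_rw [poissonProdPMF, ← Finset.prod_mul_distrib, sqrt_prod _ fun i _ => hnonneg i _,
    ENNReal.ofReal_prod_of_nonneg fun i _ => sqrt_nonneg _]
  rw [ENNReal.tsum_pi_prod fun i k => ENNReal.ofReal √(poissonPMF (r i) k * poissonPMF (r' i) k)]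
  simp_rw [tsum_ofReal_sqrt_poissonPMF_mul (hr _) (hr' _)]
  rw [← ENNReal.ofReal_prod_of_nonneg fun i _ => (exp_pos _).le, ← exp_sum, sqHellinger,
    ← Finset.sum_div, ← Finset.sum_neg_distrib]

lemma tsum_ofReal_sqrt_poissonPairPMF_mul (hr : ∀ i, 0 ≤ r i) (hr' : ∀ i, 0 ≤ r' i)
    (hs : ∀ i, 0 ≤ s i) (hs' : ∀ i, 0 ≤ s' i) :
    ∑' z, ENNReal.ofReal √(poissonPairPMF r s z * poissonPairPMF r' s' z) =
      ENNReal.ofReal (exp (-(sqHellinger r r' + sqHellinger s s') / 2)) := by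
  have hsplit (z : (Fin S → ℕ) × (Fin S → ℕ)) :
      ENNReal.ofReal √(poissonPairPMF r s z * poissonPairPMF r' s' z) =
        ENNReal.ofReal √(poissonProdPMF r z.1 * poissonProdPMF r' z.1) *
          ENNReal.ofReal √(poissonProdPMF s z.2 * poissonProdPMF s' z.2) := by
    rw [← ENNReal.ofReal_mul (sqrt_nonneg _), ← sqrt_mul (mul_nonneg
      (poissonProdPMF_nonneg hr _) (poissonProdPMF_nonneg hr' _)), poissonPairPMF, poissonPairPMF]
    ring_nf
  simp_rw [hsplit]
  rw [ENNReal.tsum_prod_mul (fun x => ENNReal.ofReal √(poissonProdPMF r x * poissonProdPMF r' x))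
    (fun y => ENNReal.ofReal √(poissonProdPMF s y * poissonProdPMF s' y)),
    tsum_ofReal_sqrt_poissonProdPMF_mul hr hr', tsum_ofReal_sqrt_poissonProdPMF_mul hs hs',
    ← ENNReal.ofReal_mul (exp_pos _).le, ← exp_add]
  ring_nf

lemma tsum_ofReal_poissonPairPMF (hr : ∀ i, 0 ≤ r i) (hs : ∀ i, 0 ≤ s i) :
    ∑' z, ENNReal.ofReal (poissonPairPMF r s z) = 1 := by
  have h := tsum_ofReal_sqrt_poissonPairPMF_mul hr hr hs hs
  simp_rw [sqrt_mul_self (poissonPairPMF_nonneg hr hs _), sqHellinger_self] at h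
  simpa using h

end PoissonProduct

lemma mul_abs_sub_mul_sqrt_le {a b s : ℝ} (ha : 0 ≤ a) (hb : 0 ≤ b) (hs : 0 ≤ s)
    (x T₁ T₂ : ℝ) :
    s * |T₁ - T₂| * √(a * b) ≤ a * (x - T₁) ^ 2 + b * (x - T₂) ^ 2 + s ^ 2 * (a + b) / 4 := by
  obtain ⟨α, hα, rfl⟩ : ∃ α, 0 ≤ α ∧ a = α ^ 2 := ⟨√a, sqrt_nonneg a, (sq_sqrt ha).symm⟩
  obtain ⟨β, hβ, rfl⟩ : ∃ β, 0 ≤ β ∧ b = β ^ 2 := ⟨√b, sqrt_nonneg b, (sq_sqrt hb).symm⟩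
  rw [← mul_pow, sqrt_sq (mul_nonneg hα hβ), ← sq_abs (x - T₁), ← sq_abs (x - T₂)]
  have htri : |T₁ - T₂| ≤ |x - T₁| + |x - T₂| := by
    rw [abs_sub_comm x T₁]; exact abs_sub_le _ _ _
  have hsαβ : 0 ≤ s * (α * β) := by positivity
  nlinarith [sq_nonneg (α * |x - T₁| - s * β / 2), sq_nonneg (β * |x - T₂| - s * α / 2),
    mul_le_mul_of_nonneg_left htri hsαβ]

open ENNReal in
lemma ofReal_le_tsum_risk_add_tsum_risk {ι : Type*} {f₁ f₂ : ι → ℝ} (h₁ : ∀ z, 0 ≤ f₁ z)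
    (h₂ : ∀ z, 0 ≤ f₂ z) (hs₁ : ∑' z, ENNReal.ofReal (f₁ z) = 1)
    (hs₂ : ∑' z, ENNReal.ofReal (f₂ z) = 1) {a : ℝ} (ha : 0 ≤ a)
    (hA : ENNReal.ofReal a ≤ ∑' z, ENNReal.ofReal √(f₁ z * f₂ z))
    (d : ι → ℝ) (T₁ T₂ : ℝ) :
    ENNReal.ofReal ((a * (T₁ - T₂)) ^ 2 / 2) ≤
      ∑' z, ENNReal.ofReal (f₁ z * (d z - T₁) ^ 2) +
        ∑' z, ENNReal.ofReal (f₂ z * (d z - T₂) ^ 2) := by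
  set s := a * |T₁ - T₂| with hs_def
  have hs : 0 ≤ s := by positivity
  have hpt (z : ι) : ENNReal.ofReal (s * |T₁ - T₂| * √(f₁ z * f₂ z)) ≤
      ENNReal.ofReal (f₁ z * (d z - T₁) ^ 2) + ENNReal.ofReal (f₂ z * (d z - T₂) ^ 2) +
        (ENNReal.ofReal (s ^ 2 / 4) * ENNReal.ofReal (f₁ z) +
          ENNReal.ofReal (s ^ 2 / 4) * ENNReal.ofReal (f₂ z)) := by
    have := h₁ z; have := h₂ z
    rw [← ofReal_mul (by positivity), ← ofReal_mul (by positivity),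
      ← ofReal_add (by positivity) (by positivity), ← ofReal_add (by positivity) (by positivity),
      ← ofReal_add (by positivity) (by positivity)]
    refine ofReal_le_ofReal ((mul_abs_sub_mul_sqrt_le (h₁ z) (h₂ z) hs (d z) T₁ T₂).trans_eq ?_)
    ring
  -- Summing `hpt` against the affinity bound `hA` gives `s² ≤ R₁ + R₂ + s² / 2`.
  have hkey : ENNReal.ofReal (s ^ 2 / 2) + ENNReal.ofReal (s ^ 2 / 2) ≤
      (∑' z, ENNReal.ofReal (f₁ z * (d z - T₁) ^ 2) +
        ∑' z, ENNReal.ofReal (f₂ z * (d z - T₂) ^ 2)) + ENNReal.ofReal (s ^ 2 / 2) :=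
    calc ENNReal.ofReal (s ^ 2 / 2) + ENNReal.ofReal (s ^ 2 / 2)
        = ENNReal.ofReal (s * |T₁ - T₂|) * ENNReal.ofReal a := by
          rw [← ofReal_add (by positivity) (by positivity), ← ofReal_mul (by positivity), hs_def]
          ring_nf
      _ ≤ ENNReal.ofReal (s * |T₁ - T₂|) * ∑' z, ENNReal.ofReal √(f₁ z * f₂ z) := by
          gcongr
      _ = ∑' z, ENNReal.ofReal (s * |T₁ - T₂| * √(f₁ z * f₂ z)) := by
          rw [← ENNReal.tsum_mul_left]
          simp_rw [ofReal_mul (by positivity : 0 ≤ s * |T₁ - T₂|)]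
      _ ≤ _ := ENNReal.tsum_le_tsum hpt
      _ = _ := by
          rw [ENNReal.tsum_add, ENNReal.tsum_add, ENNReal.tsum_add, ENNReal.tsum_mul_left,
            ENNReal.tsum_mul_left, hs₁, hs₂, mul_one, ← ofReal_add (by positivity) (by positivity)]
          congr 3; ring
  rw [mul_pow, ← sq_abs (T₁ - T₂), ← mul_pow]
  exact ENNReal.le_of_add_le_add_right ofReal_ne_top hkey

lemma ofReal_le_poissonRisk_add_poissonRisk {S : ℕ} {lam mu : ℝ} (hlam : 0 ≤ lam)
    (hmu : 0 ≤ mu) {P₁ Q₁ P₂ Q₂ : Fin S → ℝ} (hP₁ : ∀ i, 0 ≤ P₁ i) (hQ₁ : ∀ i, 0 ≤ Q₁ i)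
    (hP₂ : ∀ i, 0 ≤ P₂ i) (hQ₂ : ∀ i, 0 ≤ Q₂ i) (T₁ T₂ : ℝ)
    (est : (Fin S → ℕ) → (Fin S → ℕ) → ℝ) :
    ENNReal.ofReal
        (exp (-(lam * sqHellinger P₁ P₂ + mu * sqHellinger Q₁ Q₂)) * (T₁ - T₂) ^ 2 / 2) ≤
      poissonRisk S lam mu P₁ Q₁ T₁ est + poissonRisk S lam mu P₂ Q₂ T₂ est := by
  have hr₁ i : 0 ≤ lam * P₁ i := mul_nonneg hlam (hP₁ i)
  have hr₂ i : 0 ≤ lam * P₂ i := mul_nonneg hlam (hP₂ i)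
  have hs₁ i : 0 ≤ mu * Q₁ i := mul_nonneg hmu (hQ₁ i)
  have hs₂ i : 0 ≤ mu * Q₂ i := mul_nonneg hmu (hQ₂ i)
  have haff := (tsum_ofReal_sqrt_poissonPairPMF_mul hr₁ hr₂ hs₁ hs₂).ge
  rw [sqHellinger_const_mul hlam, sqHellinger_const_mul hmu] at haff
  set H := lam * sqHellinger P₁ P₂ + mu * sqHellinger Q₁ Q₂
  have hsq : exp (-H) * (T₁ - T₂) ^ 2 / 2 = (exp (-H / 2) * (T₁ - T₂)) ^ 2 / 2 := by
    rw [mul_pow, ← exp_nat_mul]; push_cast; ring_nf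
  rw [hsq]
  exact ofReal_le_tsum_risk_add_tsum_risk (poissonPairPMF_nonneg hr₁ hs₁)
    (poissonPairPMF_nonneg hr₂ hs₂) (tsum_ofReal_poissonPairPMF hr₁ hs₁)
    (tsum_ofReal_poissonPairPMF hr₂ hs₂) (exp_pos _).le haff (fun z => est z.1 z.2) T₁ T₂

lemma ofReal_le_iSup_poissonRisk {S : ℕ} {u lam mu : ℝ} (hlam : 0 ≤ lam) (hmu : 0 ≤ mu)
    {P₁ Q₁ P₂ Q₂ : Fin S → ℝ} (h₁ : MemU u P₁ Q₁) (h₂ : MemU u P₂ Q₂)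
    (hH : lam * sqHellinger P₁ P₂ + mu * sqHellinger Q₁ Q₂ ≤ 1)
    (est : (Fin S → ℕ) → (Fin S → ℕ) → ℝ) :
    ENNReal.ofReal ((klDiv P₁ Q₁ - klDiv P₂ Q₂) ^ 2 / 12) ≤
      ⨆ (P : Fin S → ℝ) (Q : Fin S → ℝ) (_ : MemU u P Q),
        poissonRisk S lam mu P Q (klDiv P Q) est := by
  set R := ⨆ (P : Fin S → ℝ) (Q : Fin S → ℝ) (_ : MemU u P Q),
    poissonRisk S lam mu P Q (klDiv P Q) est
  have hle {P Q : Fin S → ℝ} (h : MemU u P Q) :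
      poissonRisk S lam mu P Q (klDiv P Q) est ≤ R :=
    le_iSup₂_of_le P Q (le_iSup_of_le h le_rfl)
  have hexp : 1 / 3 ≤ exp (-(lam * sqHellinger P₁ P₂ + mu * sqHellinger Q₁ Q₂)) :=
    calc (1 : ℝ) / 3 ≤ exp (-1) := by
          rw [exp_neg, one_div]; exact inv_anti₀ (exp_pos 1) exp_one_lt_three.le
      _ ≤ _ := exp_le_exp.mpr (neg_le_neg hH)
  rw [← ENNReal.mul_le_mul_iff_right two_ne_zero ENNReal.ofNat_ne_top]
  calc 2 * ENNReal.ofReal ((klDiv P₁ Q₁ - klDiv P₂ Q₂) ^ 2 / 12)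
      = ENNReal.ofReal (1 / 3 * (klDiv P₁ Q₁ - klDiv P₂ Q₂) ^ 2 / 2) := by
        rw [← ENNReal.ofReal_ofNat 2, ← ENNReal.ofReal_mul zero_le_two]; ring_nf
    _ ≤ ENNReal.ofReal (exp (-(lam * sqHellinger P₁ P₂ + mu * sqHellinger Q₁ Q₂)) *
          (klDiv P₁ Q₁ - klDiv P₂ Q₂) ^ 2 / 2) := by gcongr
    _ ≤ _ := ofReal_le_poissonRisk_add_poissonRisk hlam hmu h₁.1.1 h₁.2.1.1 h₂.1.1 h₂.2.1.1
          _ _ est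
    _ ≤ R + R := add_le_add (hle h₁) (hle h₂)
    _ = 2 * R := (two_mul R).symm

def extendByZero {k S : ℕ} (h : k ≤ S) (v : Fin k → ℝ) : Fin S → ℝ :=
  Function.extend (Fin.castLE h) v 0

section ExtendByZero

variable {k S : ℕ} (h : k ≤ S)

lemma extendByZero_castLE (v : Fin k → ℝ) (j : Fin k) :
    extendByZero h v (Fin.castLE h j) = v j :=
  (Fin.castLE_injective h).extend_apply v 0 j

lemma extendByZero_of_notMem_range (v : Fin k → ℝ) {i : Fin S}
    (hi : i ∉ Set.range (Fin.castLE h)) : extendByZero h v i = 0 :=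
  Function.extend_apply' _ _ _ hi

lemma sum_extendByZero (g : ℝ → ℝ → ℝ) (hg : g 0 0 = 0) (v w : Fin k → ℝ) :
    ∑ i, g (extendByZero h v i) (extendByZero h w i) = ∑ j, g (v j) (w j) :=
  (Fintype.sum_of_injective _ (Fin.castLE_injective h) _ _
    (fun i hi => by simp only [extendByZero_of_notMem_range h _ hi, hg])
    (fun j => by simp only [extendByZero_castLE])).symm

lemma extendByZero_rel (p : ℝ → ℝ → Prop) (hp : p 0 0) {v w : Fin k → ℝ}
    (hvw : ∀ j, p (v j) (w j)) (i : Fin S) : p (extendByZero h v i) (extendByZero h w i) := by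
  by_cases hi : i ∈ Set.range (Fin.castLE h)
  · obtain ⟨j, rfl⟩ := hi
    simpa only [extendByZero_castLE] using hvw j
  · simpa only [extendByZero_of_notMem_range h _ hi] using hp

lemma IsProbVec.extendByZero {P : Fin k → ℝ} (hP : IsProbVec P) :
    IsProbVec (extendByZero h P) :=
  ⟨extendByZero_rel h (fun p _ => 0 ≤ p) le_rfl (w := P) hP.1,
    (sum_extendByZero h (fun p _ => p) rfl P P).trans hP.2⟩

lemma MemU.extendByZero {u : ℝ} {P Q : Fin k → ℝ} (hPQ : MemU u P Q) :
    MemU u (extendByZero h P) (extendByZero h Q) :=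
  ⟨hPQ.1.extendByZero h, hPQ.2.1.extendByZero h,
    extendByZero_rel h (fun p q => p ≤ u * q) (by simp) hPQ.2.2⟩

lemma klDiv_extendByZero (P Q : Fin k → ℝ) :
    klDiv (extendByZero h P) (extendByZero h Q) = klDiv P Q :=
  sum_extendByZero h (fun p q => p * log (p / q)) (by simp) P Q

lemma sqHellinger_extendByZero (P Q : Fin k → ℝ) :
    sqHellinger (extendByZero h P) (extendByZero h Q) = sqHellinger P Q :=
  sum_extendByZero h (fun p q => (√p - √q) ^ 2) (by simp) P Q

end ExtendByZero

def tiltedP (t : ℝ) : Fin 3 → ℝ := ![1 / 4 + t, 1 / 4 - t, 1 / 2]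

def tiltedQ (u : ℝ) : Fin 3 → ℝ := ![1 / (2 * u), 1 - 1 / u, 1 / (2 * u)]

section Tilted

variable {t u : ℝ}

lemma memU_tiltedP_tiltedQ (hu : 2 ≤ u) (ht : |t| ≤ 1 / 4) :
    MemU u (tiltedP t) (tiltedQ u) := by
  obtain ⟨ht₁, ht₂⟩ := abs_le.mp ht
  have hinv : u⁻¹ ≤ 2⁻¹ := inv_anti₀ two_pos hu
  refine ⟨⟨?_, ?_⟩, ⟨?_, ?_⟩, ?_⟩
  · intro i; fin_cases i <;> simp [tiltedP] <;> linarith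
  · simp [tiltedP, Fin.sum_univ_three]; ring
  · intro i; fin_cases i <;> simp [tiltedQ] <;> first | positivity | linarith
  · simp [tiltedQ, Fin.sum_univ_three]; field_simp; ring
  · intro i; fin_cases i <;> simp [tiltedP, tiltedQ] <;> field_simp <;> nlinarith

lemma klDiv_tiltedP_sub_klDiv_tiltedP (hu : 2 ≤ u) (ht : |t| < 1 / 4) :
    klDiv (tiltedP t) (tiltedQ u) - klDiv (tiltedP (-t)) (tiltedQ u) =
      2 * t * log (2 * (u - 1)) := by
  obtain ⟨ht₁, ht₂⟩ := abs_lt.mp ht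
  have hu₀ : 0 < u := by linarith
  have hq₁ : 1 - 1 / u ≠ 0 := (sub_pos.mpr ((div_lt_one hu₀).mpr (by linarith))).ne'
  have hq₀ : 1 / (2 * u) ≠ 0 := by positivity
  have hq : log (2 * (u - 1)) = log (1 - 1 / u) - log (1 / (2 * u)) := by
    rw [← log_div hq₁ hq₀]
    congr 1; field_simp
  have ha : 1 / 4 + t ≠ 0 := by linarith
  have hb : 1 / 4 - t ≠ 0 := by linarith
  simp only [klDiv, Fin.sum_univ_three, tiltedP, tiltedQ, Matrix.cons_val_zero,
    Matrix.cons_val_one, Matrix.cons_val_two, Matrix.head_cons, Matrix.tail_cons,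
    sub_neg_eq_add, ← sub_eq_add_neg]
  rw [hq, log_div ha hq₀, log_div ha hq₁, log_div hb hq₀, log_div hb hq₁]
  ring

lemma sqHellinger_tiltedP_le (ht : |t| ≤ 1 / 4) :
    sqHellinger (tiltedP t) (tiltedP (-t)) ≤ 16 * t ^ 2 := by
  obtain ⟨ht₁, ht₂⟩ := abs_le.mp ht
  have h₁ : (√(1 / 4 + t) - √(1 / 4 - t)) ^ 2 ≤ 8 * t ^ 2 :=
    (sq_sqrt_sub_sqrt_le (by linarith) (by linarith)).trans_eq (by ring)
  have h₂ : (√(1 / 4 - t) - √(1 / 4 + t)) ^ 2 ≤ 8 * t ^ 2 :=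
    (sq_sqrt_sub_sqrt_le (by linarith) (by linarith)).trans_eq (by ring)
  simp only [sqHellinger, Fin.sum_univ_three, tiltedP, Matrix.cons_val_zero, Matrix.cons_val_one,
    Matrix.cons_val_two, Matrix.head_cons, Matrix.tail_cons, sub_neg_eq_add, ← sub_eq_add_neg,
    sub_self]
  linarith

end Tilted

lemma ofReal_log_sq_div_le_iSup_poissonRisk {S : ℕ} (hS : 3 ≤ S) {u m n : ℝ} (hu : 2 ≤ u)
    (hm : 1 < m) (hn : 0 ≤ n) (est : (Fin S → ℕ) → (Fin S → ℕ) → ℝ) :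
    ENNReal.ofReal (log u ^ 2 / (48 * m)) ≤
      ⨆ (P : Fin S → ℝ) (Q : Fin S → ℝ) (_ : MemU u P Q),
        poissonRisk S m n P Q (klDiv P Q) est := by
  set t := √(1 / (16 * m))
  have ht_sq : t ^ 2 = 1 / (16 * m) := sq_sqrt (by positivity)
  have ht : |t| < 1 / 4 := by
    rw [abs_of_nonneg (sqrt_nonneg _)]
    refine lt_of_pow_lt_pow_left₀ 2 (by norm_num) ?_
    rw [ht_sq, div_lt_iff₀ (by positivity)]
    nlinarith
  have hH : m * sqHellinger (extendByZero hS (tiltedP t)) (extendByZero hS (tiltedP (-t))) +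
      n * sqHellinger (extendByZero hS (tiltedQ u)) (extendByZero hS (tiltedQ u)) ≤ 1 := by
    rw [sqHellinger_self, sqHellinger_extendByZero, mul_zero, add_zero]
    calc m * sqHellinger (tiltedP t) (tiltedP (-t)) ≤ m * (16 * t ^ 2) := by
          gcongr; exact sqHellinger_tiltedP_le ht.le
      _ = 1 := by rw [ht_sq]; field_simp
  have key := ofReal_le_iSup_poissonRisk (by linarith) hn
    ((memU_tiltedP_tiltedQ hu ht.le).extendByZero hS)
    ((memU_tiltedP_tiltedQ hu (by rw [abs_neg]; exact ht.le)).extendByZero hS) hH est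
  rw [klDiv_extendByZero, klDiv_extendByZero, klDiv_tiltedP_sub_klDiv_tiltedP hu ht] at key
  refine le_trans (ENNReal.ofReal_le_ofReal ?_) key
  have hlog : log u ≤ log (2 * (u - 1)) := log_le_log (by linarith) (by linarith)
  have hlog₀ : 0 ≤ log u := log_nonneg (by linarith)
  calc log u ^ 2 / (48 * m) = 4 * t ^ 2 * log u ^ 2 / 12 := by rw [ht_sq]; field_simp; ring
    _ ≤ 4 * t ^ 2 * log (2 * (u - 1)) ^ 2 / 12 := by gcongr
    _ = (2 * t * log (2 * (u - 1))) ^ 2 / 12 := by ring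

def pointMass : Fin 2 → ℝ := ![1, 0]

def shiftedQ (u x : ℝ) : Fin 2 → ℝ := ![(1 + x) / u, 1 - (1 + x) / u]

section Shifted

variable {u x : ℝ}

lemma memU_pointMass_shiftedQ (hu : 0 < u) (hx : 0 ≤ x) (hxu : 1 + x ≤ u) :
    MemU u pointMass (shiftedQ u x) := by
  have hle : (1 + x) / u ≤ 1 := (div_le_one hu).mpr hxu
  refine ⟨⟨?_, ?_⟩, ⟨?_, ?_⟩, ?_⟩
  · intro i; fin_cases i <;> simp [pointMass]
  · simp [pointMass]
  · intro i; fin_cases i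
    · exact div_nonneg (by linarith) hu.le
    · exact sub_nonneg.mpr hle
  · simp [shiftedQ]
  · intro i; fin_cases i <;> simp [pointMass, shiftedQ]
    · rw [mul_div_cancel₀ _ hu.ne']; linarith
    · linarith [mul_le_mul_of_nonneg_left hle hu.le]

lemma klDiv_pointMass_shiftedQ : klDiv pointMass (shiftedQ u x) = log (u / (1 + x)) := by
  simp [klDiv, pointMass, shiftedQ]

lemma sqHellinger_shiftedQ_le (hu : 2 ≤ u) (hx : 0 ≤ x) (hx₁ : x ≤ 1) :
    sqHellinger (shiftedQ u 0) (shiftedQ u x) ≤ 2 * x ^ 2 / u := by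
  have hu₀ : 0 < u := by linarith
  have hle : (1 + x) / u ≤ 1 := (div_le_one hu₀).mpr (by linarith)
  have hlt : (1 + 0) / u < 1 := (div_lt_one hu₀).mpr (by linarith)
  have h₁ := sq_sqrt_sub_sqrt_le (a := (1 + 0) / u) (b := (1 + x) / u)
    (by positivity) (by positivity)
  have h₂ := sq_sqrt_sub_sqrt_le (a := 1 - (1 + 0) / u) (b := 1 - (1 + x) / u)
    (sub_nonneg.mpr hlt.le) (sub_nonneg.mpr hle)
  have e₁ : ((1 + 0) / u - (1 + x) / u) ^ 2 / ((1 + 0) / u + (1 + x) / u) ≤ x ^ 2 / u := by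
    rw [div_le_div_iff₀ (by positivity) hu₀]; field_simp; nlinarith
  have e₂ : (1 - (1 + 0) / u - (1 - (1 + x) / u)) ^ 2 / (1 - (1 + 0) / u + (1 - (1 + x) / u)) ≤
      x ^ 2 / u := by
    rw [div_le_div_iff₀ (by linarith) hu₀]; field_simp; nlinarith
  simp only [sqHellinger, Fin.sum_univ_two, shiftedQ, Matrix.cons_val_zero, Matrix.cons_val_one]
  calc _ ≤ x ^ 2 / u + x ^ 2 / u := add_le_add (h₁.trans e₁) (h₂.trans e₂)
    _ = 2 * x ^ 2 / u := by ring

end Shifted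

lemma ofReal_div_le_iSup_poissonRisk {S : ℕ} (hS : 2 ≤ S) {u m n : ℝ} (hu : 2 ≤ u)
    (hm : 0 ≤ m) (hn : u ≤ 2 * n) (est : (Fin S → ℕ) → (Fin S → ℕ) → ℝ) :
    ENNReal.ofReal (u / (96 * n)) ≤
      ⨆ (P : Fin S → ℝ) (Q : Fin S → ℝ) (_ : MemU u P Q),
        poissonRisk S m n P Q (klDiv P Q) est := by
  have hn₀ : 0 < n := by linarith
  set x := √(u / (2 * n))
  have hx_sq : x ^ 2 = u / (2 * n) := sq_sqrt (by positivity)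
  have hx₀ : 0 ≤ x := sqrt_nonneg _
  have hx₁ : x ≤ 1 := sqrt_le_one.mpr ((div_le_one (by positivity)).mpr hn)
  have hH : m * sqHellinger (extendByZero hS pointMass) (extendByZero hS pointMass) +
      n * sqHellinger (extendByZero hS (shiftedQ u 0)) (extendByZero hS (shiftedQ u x)) ≤ 1 := by
    rw [sqHellinger_self, sqHellinger_extendByZero, mul_zero, zero_add]
    calc n * sqHellinger (shiftedQ u 0) (shiftedQ u x) ≤ n * (2 * x ^ 2 / u) := by
          gcongr; exact sqHellinger_shiftedQ_le hu hx₀ hx₁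
      _ = 1 := by rw [hx_sq]; field_simp
  have key := ofReal_le_iSup_poissonRisk hm hn₀.le
    ((memU_pointMass_shiftedQ (by linarith) le_rfl (by linarith)).extendByZero hS)
    ((memU_pointMass_shiftedQ (by linarith) hx₀ (by linarith)).extendByZero hS) hH est
  rw [klDiv_extendByZero, klDiv_extendByZero, klDiv_pointMass_shiftedQ,
    klDiv_pointMass_shiftedQ, add_zero, div_one, log_div (by linarith) (by linarith),
    sub_sub_cancel] at key
  refine le_trans (ENNReal.ofReal_le_ofReal ?_) key
  have hlog : x / 2 ≤ log (1 + x) := (le_log_one_add_of_nonneg hx₀).trans' <| by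
    rw [le_div_iff₀ (by linarith)]; nlinarith
  calc u / (96 * n) = (x / 2) ^ 2 / 12 := by rw [div_pow, hx_sq]; field_simp; ring
    _ ≤ log (1 + x) ^ 2 / 12 := by gcongr

/-- Minimax lower bound for the "variance" terms: under the Poisson sampling model,
every estimator `D̂` satisfies
`sup_{(P,Q) ∈ U_{S,u}} E (D̂ − D(P‖Q))² ≥ c ((ln u)²/m + u/n)`. -/
theorem kl_poisson_variance_lower_bound :
    ∃ c : ℝ, 0 < c ∧
      ∀ (S m n : ℕ) (u : ℝ), Odd S → 3 ≤ S → 2 ≤ u → 5 ≤ m → 16 * u ≤ (n : ℝ) →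
        ∀ est : (Fin S → ℕ) → (Fin S → ℕ) → ℝ,
          ENNReal.ofReal (c * ((Real.log u) ^ 2 / (m : ℝ) + u / (n : ℝ))) ≤
            ⨆ (P : Fin S → ℝ) (Q : Fin S → ℝ) (_ : MemU u P Q),
              poissonRisk S (m : ℝ) (n : ℝ) P Q (klDiv P Q) est := by
  refine ⟨1 / 192, by norm_num, fun S m n u _ hS hu hm hn est => ?_⟩
  have hm' : (5 : ℝ) ≤ m := by exact_mod_cast hm
  have hlog := ofReal_log_sq_div_le_iSup_poissonRisk hS hu (m := m) (by linarith)
    n.cast_nonneg est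
  have hdiv := ofReal_div_le_iSup_poissonRisk (by omega) hu m.cast_nonneg (n := n)
    (by linarith) est
  refine le_trans (ENNReal.ofReal_le_ofReal ?_) (ENNReal.ofReal_max _ _ ▸ max_le hlog hdiv)
  have hA : 0 ≤ log u ^ 2 / m := by positivity
  rw [mul_comm 48, mul_comm 96, ← div_div, ← div_div]
  rcases le_total (log u ^ 2 / m) (u / n) with h | h
  · linarith [le_max_right (log u ^ 2 / m / 48) (u / n / 96)]
  · linarith [le_max_left (log u ^ 2 / m / 48) (u / n / 96)]

end
end

section
/- Let U_S = {(P,Q) : P, Q ∈ M_S and P ≪ Q (i.e. q_i = 0 implies p_i = 0)}. Then for all integers S ≥ 2, m ≥ 0, n ≥ 0, and every estimator D̂ (any measurable, possibly randomized, function of m i.i.d. samples from P and n i.i.d. samples from Q, independent of each other), sup_{(P,Q)∈U_S} E[(D̂ − D(P‖Q))²] = +∞; consequently the minimax risk for estimating the KL divergence over U_S is infinite. -/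
open scoped BigOperators ENNReal

noncomputable section

/-- `(P, Q)` lies in `U_S`: both probability vectors with `P ≪ Q`. -/
def MemUS {S : ℕ} (P Q : Fin S → ℝ) : Prop :=
  IsProbVec P ∧ IsProbVec Q ∧ ∀ i, Q i = 0 → P i = 0

/-- Probability of observing the sample sequence `xs` from `m` i.i.d. draws from `P`. -/
def iidPMF (S m : ℕ) (P : Fin S → ℝ) (xs : Fin m → Fin S) : ℝ :=
  ∏ j, P (xs j)

/-- Mean squared error of the estimator `est` of the KL divergence based on `m` i.i.d.
samples from `P` and `n` i.i.d. samples from `Q`, independent of each other. -/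
def iidRisk (S m n : ℕ) (P Q : Fin S → ℝ)
    (est : (Fin m → Fin S) → (Fin n → Fin S) → ℝ) : ℝ≥0∞ :=
  ∑' z : (Fin m → Fin S) × (Fin n → Fin S),
    ENNReal.ofReal (iidPMF S m P z.1 * iidPMF S n Q z.2 *
      (est z.1 z.2 - klDiv P Q) ^ 2)

/-!
Take `P = δᵢ` and `Q = q δᵢ + (1 - q) δⱼ` with `0 < q ≤ 1`, so that `P ≪ Q` and
`D(P‖Q) = -log q`. With probability at least `(1 - q)ⁿ` the samples are all `i` from `P`
and all `j` from `Q`, and on that event the estimator outputs one fixed number `c`, whatever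
`q` is. Hence the risk is at least `(1 - q)ⁿ (c + log q)²`, which tends to `∞` as `q → 0⁺`.
-/

open scoped Topology
open Filter

def pairVec {S : ℕ} (i j : Fin S) (q : ℝ) : Fin S → ℝ :=
  Pi.single i q + Pi.single j (1 - q)

section PairVec

variable {S : ℕ} {i j : Fin S}

lemma pairVec_apply_left (hij : i ≠ j) (q : ℝ) : pairVec i j q i = q := by
  simp [pairVec, hij]

lemma pairVec_apply_right (hij : i ≠ j) (q : ℝ) : pairVec i j q j = 1 - q := by
  simp [pairVec, hij.symm]

lemma isProbVec_single (i : Fin S) : IsProbVec (Pi.single i (1 : ℝ)) :=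
  ⟨fun k => by by_cases h : k = i <;> simp [h], by simp⟩

lemma isProbVec_pairVec {q : ℝ} (hq₀ : 0 ≤ q) (hq₁ : q ≤ 1) : IsProbVec (pairVec i j q) := by
  refine ⟨fun k => add_nonneg ?_ ?_, by simp [pairVec, Finset.sum_add_distrib]⟩
  · by_cases h : k = i <;> simp [h, hq₀]
  · by_cases h : k = j <;> simp [h, hq₁]

lemma memUS_single_pairVec (hij : i ≠ j) {q : ℝ} (hq₀ : 0 < q) (hq₁ : q ≤ 1) :
    MemUS (Pi.single i 1) (pairVec i j q) := by
  refine ⟨isProbVec_single i, isProbVec_pairVec hq₀.le hq₁, fun k hk => ?_⟩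
  rcases eq_or_ne k i with rfl | h
  · exact absurd (pairVec_apply_left hij q ▸ hk) hq₀.ne'
  · simp [h]

lemma klDiv_single_pairVec (hij : i ≠ j) (q : ℝ) :
    klDiv (Pi.single i 1) (pairVec i j q) = -Real.log q := by
  rw [klDiv, Finset.sum_eq_single i (fun k _ hk => by simp [hk]) (by simp)]
  simp [pairVec_apply_left hij, Real.log_inv]

end PairVec

lemma iidPMF_const (S m : ℕ) (P : Fin S → ℝ) (i : Fin S) :
    iidPMF S m P (fun _ => i) = P i ^ m := by
  simp [iidPMF]

lemma ofReal_le_iidRisk {S m n : ℕ} (P Q : Fin S → ℝ)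
    (est : (Fin m → Fin S) → (Fin n → Fin S) → ℝ) (x : Fin m → Fin S) (y : Fin n → Fin S) :
    ENNReal.ofReal (iidPMF S m P x * iidPMF S n Q y * (est x y - klDiv P Q) ^ 2) ≤
      iidRisk S m n P Q est :=
  ENNReal.le_tsum (x, y)

lemma tendsto_one_sub_pow_mul_add_log_sq (n : ℕ) (c : ℝ) :
    Tendsto (fun q => (1 - q) ^ n * (c + Real.log q) ^ 2) (𝓝[>] 0) atTop := by
  have h_pow : Tendsto (fun q : ℝ => (1 - q) ^ n) (𝓝[>] 0) (𝓝 1) :=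
    (((continuous_const.sub continuous_id).pow n).tendsto' 0 1 (by simp)).mono_left
      nhdsWithin_le_nhds
  have h_log : Tendsto (fun q => c + Real.log q) (𝓝[>] 0) atBot :=
    tendsto_atBot_add_const_left _ c Real.tendsto_log_nhdsGT_zero
  exact h_pow.pos_mul_atTop one_pos (by simpa [sq] using h_log.atBot_mul_atBot₀ h_log)

lemma tendsto_iidRisk_single_pairVec {S m n : ℕ} {i j : Fin S} (hij : i ≠ j)
    (est : (Fin m → Fin S) → (Fin n → Fin S) → ℝ) :
    Tendsto (fun q => iidRisk S m n (Pi.single i 1) (pairVec i j q) est) (𝓝[>] 0) (𝓝 ⊤) := by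
  refine tendsto_nhds_top_mono' (ENNReal.tendsto_ofReal_atTop.comp
    (tendsto_one_sub_pow_mul_add_log_sq n (est (fun _ => i) (fun _ => j)))) fun q => ?_
  have h := ofReal_le_iidRisk (Pi.single i 1) (pairVec i j q) est (fun _ => i) (fun _ => j)
  rwa [iidPMF_const, iidPMF_const, pairVec_apply_right hij, klDiv_single_pairVec hij,
    Pi.single_eq_same, one_pow, one_mul, sub_neg_eq_add] at h

/-- Estimating the KL divergence over `U_S = {(P,Q) : P ≪ Q}` is impossible in the
minimax sense: every estimator has infinite worst-case mean squared error, for any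
configuration `(S, m, n)` with `S ≥ 2`. -/
theorem kl_minimax_unbounded (S m n : ℕ) (hS : 2 ≤ S)
    (est : (Fin m → Fin S) → (Fin n → Fin S) → ℝ) :
    (⨆ (P : Fin S → ℝ) (Q : Fin S → ℝ) (_ : MemUS P Q), iidRisk S m n P Q est) = ⊤ := by
  obtain ⟨i, j, hij⟩ : ∃ i j : Fin S, i ≠ j :=
    ⟨⟨0, by omega⟩, ⟨1, by omega⟩, by simp [Fin.ext_iff]⟩
  refine top_le_iff.1 (le_of_tendsto (tendsto_iidRisk_single_pairVec hij est) ?_)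
  filter_upwards [Ioo_mem_nhdsGT one_pos] with q hq
  exact le_iSup₂_of_le (Pi.single i 1) (pairVec i j q)
    (le_iSup_of_le (memUS_single_pairVec hij hq.1 hq.2.le) le_rfl)

end
end

section
/- There exists a universal constant C > 0 such that for all reals 0 < a < b and every positive integer n, the best uniform polynomial approximation error of ln x on [a,b] satisfies E_n[ln x; [a,b]] ≤ C·W(b/(a·n²)), where W(t) = t/e for t ≤ e and W(t) = ln t for t > e. -/
open scoped BigOperators

noncomputable section

/-- Best uniform polynomial approximation error of degree `≤ n` of `f` on `[a,b]`:
`E_n[f; [a,b]] = inf_{deg P ≤ n} sup_{x ∈ [a,b]} |f(x) − P(x)|`. -/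
def bestApproxErr (n : ℕ) (f : ℝ → ℝ) (a b : ℝ) : ℝ :=
  ⨅ p : {p : Polynomial ℝ // p.degree ≤ n},
    ⨆ x ∈ Set.Icc a b, |f x - (p : Polynomial ℝ).eval x|

/-- The function `W`: `W(t) = t/e` for `t ≤ e`, and `W(t) = ln t` for `t > e`. -/
def Wfun (t : ℝ) : ℝ :=
  if t ≤ Real.exp 1 then t / Real.exp 1 else Real.log t

/-!
Put `α = √a`, `β = √b` and `r = (β - α) / (β + α) ∈ [0, 1)`. The substitution
`x = ((β + α) / 2) ^ 2 * (1 + 2 r cos θ + r ^ 2)` maps `θ ∈ [0, π]` onto `[a, b]`, and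
`log (1 + 2 r cos θ + r ^ 2) = 2 Re log (1 + r e^{iθ}) = ∑ₖ 2 (-1)^(k+1) r^k cos (k θ) / k`.
Since `cos (k θ) = T_k (cos θ)`, truncating this Chebyshev series after degree `n` approximates
`log` on `[a, b]` within `2 ∑_{k > n} r^k / k`. As `n r^n (1 - r) ≤ 1` and `1 - r ≥ α / β`,
this tail is at most `2 / (n (1 - r))² ≤ 2 b / (a n²)`. When `b / (a n²)` is large, splitting
it at `k = n K` with `K = ⌈β / (α n)⌉` bounds it by a harmonic sum `2 log K` plus a geometric
tail `≤ 2`.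
-/

open Real Polynomial Finset

def logTail (r : ℝ) (m : ℕ) : ℝ := ∑' k : ℕ, r ^ (k + m) / (k + m : ℕ)

section LogTail

variable {r : ℝ}

lemma pow_div_natCast_le_pow (hr0 : 0 ≤ r) (k : ℕ) : r ^ k / k ≤ r ^ k := by
  rcases k.eq_zero_or_pos with rfl | hk
  · simp
  · exact div_le_self (pow_nonneg hr0 k) (by exact_mod_cast hk)

lemma summable_logTail (hr0 : 0 ≤ r) (hr1 : r < 1) (m : ℕ) :
    Summable fun k : ℕ => r ^ (k + m) / (k + m : ℕ) :=
  ((summable_nat_add_iff m).2 (summable_geometric_of_lt_one hr0 hr1)).of_nonneg_of_le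
    (fun _ => by positivity) fun k => pow_div_natCast_le_pow hr0 (k + m)

lemma logTail_eq_sum_add (hr0 : 0 ≤ r) (hr1 : r < 1) {m N : ℕ} (h : m ≤ N) :
    logTail r m = ∑ k ∈ Ico m N, r ^ k / k + logTail r N := by
  rw [logTail, ← (summable_logTail hr0 hr1 m).sum_add_tsum_nat_add (N - m),
    sum_Ico_eq_sum_range, logTail]
  congr 1
  · exact sum_congr rfl fun k _ => by rw [add_comm]
  · exact tsum_congr fun k => by rw [add_assoc, Nat.sub_add_cancel h]

lemma logTail_le (hr0 : 0 ≤ r) (hr1 : r < 1) {m : ℕ} (hm : 1 ≤ m) :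
    logTail r m ≤ r ^ m / (m * (1 - r)) := by
  calc logTail r m ≤ ∑' k : ℕ, r ^ m / m * r ^ k :=
        (summable_logTail hr0 hr1 m).tsum_le_tsum (fun k => ?_)
          ((summable_geometric_of_lt_one hr0 hr1).mul_left _)
    _ = r ^ m / (m * (1 - r)) := by
        rw [tsum_mul_left, tsum_geometric_of_lt_one hr0 hr1, ← div_eq_mul_inv, div_div]
  rw [pow_add, mul_comm, div_mul_eq_mul_div]
  gcongr
  exact_mod_cast Nat.le_add_left m k

lemma natCast_mul_pow_mul_one_sub_le_one (hr0 : 0 ≤ r) (hr1 : r ≤ 1) (n : ℕ) :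
    n * r ^ n * (1 - r) ≤ 1 := by
  have hgeom : n * r ^ n ≤ ∑ i ∈ range n, r ^ i := by
    simpa using card_nsmul_le_sum (range n) (r ^ ·) (r ^ n)
      fun i hi => pow_le_pow_of_le_one hr0 hr1 (mem_range.1 hi).le
  calc n * r ^ n * (1 - r) ≤ (1 - r) * ∑ i ∈ range n, r ^ i := by
        rw [mul_comm]; gcongr
    _ = 1 - r ^ n := mul_neg_geom_sum r n
    _ ≤ 1 := by linarith [pow_nonneg hr0 n]

lemma logTail_succ_le (hr0 : 0 ≤ r) (hr1 : r < 1) {n : ℕ} (hn : 1 ≤ n) :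
    logTail r (n + 1) ≤ 1 / (n * (1 - r)) ^ 2 := by
  calc logTail r (n + 1) ≤ r ^ (n + 1) / ((n + 1 : ℕ) * (1 - r)) :=
        logTail_le hr0 hr1 (by omega)
    _ ≤ r ^ n / (n * (1 - r)) :=
        div_le_div₀ (by positivity) (pow_le_pow_of_le_one hr0 hr1.le n.le_succ) (by positivity)
          (by gcongr; exact_mod_cast n.le_succ)
    _ ≤ 1 / (n * (1 - r)) ^ 2 := by
        rw [div_le_div_iff₀ (by positivity) (by positivity)]
        nlinarith [mul_le_mul_of_nonneg_right (natCast_mul_pow_mul_one_sub_le_one hr0 hr1.le n)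
          (by positivity : (0 : ℝ) ≤ n * (1 - r))]

lemma sum_Ico_succ_inv_le_log {n N : ℕ} (hn : 1 ≤ n) (hnN : n ≤ N) :
    ∑ k ∈ Ico (n + 1) (N + 1), (k : ℝ)⁻¹ ≤ log (N / n) := by
  have hn' : (0 : ℝ) < n := by exact_mod_cast hn
  rw [← sum_Ico_add' (c := 1), ← integral_inv]
  · exact (inv_antitoneOn_Icc_right hn').sum_le_integral_Ico hnN
  · rw [Set.uIcc_of_le (by exact_mod_cast hnN)]
    exact fun h => h.1.not_gt hn'

lemma logTail_succ_le_log_add (hr0 : 0 ≤ r) (hr1 : r < 1) {n K : ℕ} (hn : 1 ≤ n)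
    (hK : 1 ≤ K) :
    logTail r (n + 1) ≤ log K + 1 / (n * K * (1 - r)) := by
  have hnK : n ≤ n * K := Nat.le_mul_of_pos_right n hK
  have hn' : (0 : ℝ) < n := by exact_mod_cast hn
  rw [logTail_eq_sum_add hr0 hr1 (Nat.succ_le_succ hnK)]
  gcongr
  · calc ∑ k ∈ Ico (n + 1) (n * K + 1), r ^ k / k
          ≤ ∑ k ∈ Ico (n + 1) (n * K + 1), (k : ℝ)⁻¹ :=
          sum_le_sum fun k _ => by
            rw [div_eq_mul_inv]
            exact mul_le_of_le_one_left (by positivity) (pow_le_one₀ hr0 hr1.le)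
      _ ≤ log K := by
          refine (sum_Ico_succ_inv_le_log hn hnK).trans_eq ?_
          push_cast
          rw [mul_div_cancel_left₀ _ hn'.ne']
  · calc logTail r (n * K + 1) ≤ r ^ (n * K + 1) / ((n * K + 1 : ℕ) * (1 - r)) :=
          logTail_le hr0 hr1 (by omega)
      _ ≤ 1 / (n * K * (1 - r)) := by
          gcongr
          · exact pow_le_one₀ hr0 hr1.le
          · push_cast; linarith

lemma two_mul_logTail_succ_le_Wfun (hr0 : 0 ≤ r) (hr1 : r < 1) {n : ℕ} (hn : 1 ≤ n) {q : ℝ}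
    (hq : 1 ≤ q * (n * (1 - r))) : 2 * logTail r (n + 1) ≤ 7 * Wfun (q ^ 2) := by
  have hn' : (0 : ℝ) < n := by exact_mod_cast hn
  have hs : 0 < n * (1 - r) := mul_pos hn' (by linarith)
  have hq0 : 0 < q := pos_of_mul_pos_left (one_pos.trans_le hq) hs.le
  have he : 2 < exp 1 := by linarith [exp_one_gt_d9]
  rw [Wfun]
  split_ifs with hsmall
  · have hinv : 1 / (n * (1 - r)) ≤ q := by rwa [div_le_iff₀ hs]
    calc 2 * logTail r (n + 1) ≤ 2 * (1 / (n * (1 - r))) ^ 2 := by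
          rw [div_pow, one_pow]; gcongr; exact logTail_succ_le hr0 hr1 hn
      _ ≤ 2 * q ^ 2 := by gcongr
      _ ≤ 7 * (q ^ 2 / exp 1) := by
          rw [mul_div_assoc', le_div_iff₀ (exp_pos 1)]
          nlinarith [exp_one_lt_d9, sq_nonneg q]
  · rw [not_le] at hsmall
    have hlog : 1 < log (q ^ 2) := by rwa [lt_log_iff_exp_lt (by positivity)]
    have hq1 : 1 < q := by nlinarith
    set K := ⌈q⌉₊
    have hqK : q ≤ K := Nat.le_ceil q
    have hK2q : (K : ℝ) ≤ 2 * q := by linarith [Nat.ceil_lt_add_one hq0.le]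
    have hK : 1 ≤ K := by exact_mod_cast hq1.le.trans hqK
    calc 2 * logTail r (n + 1) ≤ 2 * (log K + 1 / (n * K * (1 - r))) := by
          gcongr; exact logTail_succ_le_log_add hr0 hr1 hn hK
      _ ≤ 2 * (log (2 * q) + 1) := by
          gcongr
          rw [div_le_one (by positivity)]
          nlinarith
      _ = 2 * log 2 + log (q ^ 2) + 2 := by
          rw [log_mul two_ne_zero hq0.ne', log_pow]; push_cast; ring
      _ ≤ 7 * log (q ^ 2) := by linarith [log_two_lt_d9]

end LogTail

lemma hasSum_log_one_add_two_mul_cos {r : ℝ} (hr : |r| < 1) (θ : ℝ) :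
    HasSum (fun k : ℕ => 2 * (-1) ^ (k + 1) * r ^ k * cos (k * θ) / k)
      (log (1 + 2 * r * cos θ + r ^ 2)) := by
  set z : ℂ := r * Complex.exp (θ * Complex.I)
  have hz : ‖z‖ < 1 := by simpa [z, Complex.norm_exp_ofReal_mul_I] using hr
  have hterm (k : ℕ) : (-1) ^ (k + 1) * z ^ k / k
      = (((-1) ^ (k + 1) * r ^ k / k : ℝ) : ℂ) * Complex.exp ((k * θ : ℝ) * Complex.I) := by
    simp only [z, mul_pow, ← Complex.exp_nat_mul]
    push_cast
    ring_nf
  have hnormSq : Complex.normSq (1 + z) = 1 + 2 * r * cos θ + r ^ 2 := by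
    rw [Complex.normSq_apply]
    simp only [z, Complex.add_re, Complex.add_im, Complex.one_re, Complex.one_im,
      Complex.re_ofReal_mul, Complex.im_ofReal_mul, Complex.exp_ofReal_mul_I_re,
      Complex.exp_ofReal_mul_I_im]
    linear_combination r ^ 2 * sin_sq_add_cos_sq θ
  have h := (Complex.hasSum_re (Complex.hasSum_taylorSeries_log hz)).mul_left 2
  simp only [hterm, Complex.re_ofReal_mul, Complex.exp_ofReal_mul_I_re] at h
  have hval : 2 * log ‖1 + z‖ = log (1 + 2 * r * cos θ + r ^ 2) := by
    rw [← hnormSq, ← Complex.sq_norm, log_pow, Nat.cast_ofNat]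
  rw [Complex.log_re, hval] at h
  exact h.congr_fun fun k => by ring

lemma exists_poly_log_one_add_two_mul_le {r : ℝ} (hr : |r| < 1) (n : ℕ) :
    ∃ P : ℝ[X], P.degree ≤ n ∧ ∀ c ∈ Set.Icc (-1 : ℝ) 1,
      |log (1 + 2 * r * c + r ^ 2) - P.eval c| ≤ 2 * logTail |r| (n + 1) := by
  let a (k : ℕ) : ℝ := 2 * (-1) ^ (k + 1) * r ^ k / k
  refine ⟨∑ k ∈ range (n + 1), C (a k) * Chebyshev.T ℝ k, ?_, fun c hc => ?_⟩
  · refine degree_le_of_natDegree_le (natDegree_sum_le_of_forall_le _ _ fun k hk => ?_)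
    refine (natDegree_C_mul_le _ _).trans ?_
    rw [Chebyshev.natDegree_T, Int.natAbs_natCast]
    exact Nat.lt_succ_iff.1 (mem_range.1 hk)
  obtain ⟨θ, rfl⟩ : ∃ θ, cos θ = c := ⟨arccos c, cos_arccos hc.1 hc.2⟩
  have hS := hasSum_log_one_add_two_mul_cos hr θ
  have heval : (∑ k ∈ range (n + 1), C (a k) * Chebyshev.T ℝ k).eval (cos θ)
      = ∑ k ∈ range (n + 1), 2 * (-1) ^ (k + 1) * r ^ k * cos (k * θ) / k := by
    simp only [eval_finsetSum, eval_mul, eval_C, Chebyshev.T_real_cos, a]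
    refine sum_congr rfl fun k _ => ?_
    push_cast
    ring
  rw [heval, ← hS.tsum_eq, ← hS.summable.sum_add_tsum_nat_add (n + 1), add_sub_cancel_left]
  refine tsum_of_norm_bounded (E := ℝ)
    ((summable_logTail (abs_nonneg r) hr (n + 1)).hasSum.mul_left 2) fun k => ?_
  rw [Real.norm_eq_abs, abs_div, abs_mul, abs_mul, abs_mul, abs_pow, abs_pow, abs_neg, abs_one,
    one_pow, Nat.abs_cast, abs_two, mul_one, mul_assoc, ← mul_div_assoc]
  gcongr
  exact mul_le_of_le_one_right (by positivity) (abs_cos_le_one _)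

lemma bestApproxErr_le_of_abs_sub_le {n : ℕ} {f : ℝ → ℝ} {a b ε : ℝ} (hab : a ≤ b)
    {P : ℝ[X]} (hP : P.degree ≤ n) (h : ∀ x ∈ Set.Icc a b, |f x - P.eval x| ≤ ε) :
    bestApproxErr n f a b ≤ ε := by
  have hε : 0 ≤ ε := (abs_nonneg _).trans (h a ⟨le_rfl, hab⟩)
  refine (ciInf_le ⟨0, ?_⟩ (⟨P, hP⟩ : {p : ℝ[X] // p.degree ≤ n})).trans ?_
  · rintro _ ⟨p, rfl⟩
    exact Real.iSup_nonneg fun x => Real.iSup_nonneg fun _ => abs_nonneg _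
  · exact Real.iSup_le (fun x => Real.iSup_le (h x) hε) hε

lemma exists_poly_log_le_logTail {α β : ℝ} (hα : 0 < α) (hαβ : α < β) (n : ℕ) :
    ∃ P : ℝ[X], P.degree ≤ n ∧ ∀ x ∈ Set.Icc (α ^ 2) (β ^ 2),
      |log x - P.eval x| ≤ 2 * logTail ((β - α) / (β + α)) (n + 1) := by
  set r := (β - α) / (β + α)
  have hr0 : 0 ≤ r := div_nonneg (by linarith) (by linarith)
  have hr1 : r < 1 := (div_lt_one (by linarith)).2 (by linarith)
  obtain ⟨P, hPdeg, hP⟩ :=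
    exists_poly_log_one_add_two_mul_le (abs_lt.2 ⟨by linarith, hr1⟩) n
  rw [abs_of_nonneg hr0] at hP
  have hs : 0 < β + α := by linarith
  have hd : 0 < β ^ 2 - α ^ 2 := by nlinarith
  let ℓ : ℝ[X] := C (2 / (β ^ 2 - α ^ 2)) * X + C (-(α ^ 2 + β ^ 2) / (β ^ 2 - α ^ 2))
  refine ⟨C (2 * log ((β + α) / 2)) + P.comp ℓ, ?_, fun x hx => ?_⟩
  · refine (degree_add_le _ _).trans (max_le (degree_C_le.trans (by exact_mod_cast n.zero_le)) ?_)
    refine degree_le_of_natDegree_le (natDegree_comp_le.trans ?_)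
    exact (Nat.mul_le_mul (natDegree_le_of_degree_le hPdeg) natDegree_linear_le).trans_eq
      (mul_one n)
  set c := ℓ.eval x
  have hc : c ∈ Set.Icc (-1 : ℝ) 1 := by
    simp only [c, ℓ, eval_add, eval_mul, eval_C, eval_X, Set.mem_Icc]
    constructor <;> rw [← sub_nonneg] <;> field_simp <;> linarith [hx.1, hx.2]
  have hx_eq : x = ((β + α) / 2) ^ 2 * (1 + 2 * r * c + r ^ 2) := by
    simp only [c, ℓ, r, eval_add, eval_mul, eval_C, eval_X]
    field_simp [hs.ne', hd.ne']
    ring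
  have hpos : 0 < 1 + 2 * r * c + r ^ 2 := by
    have hx0 : 0 < x := (by positivity : 0 < α ^ 2).trans_le hx.1
    rw [hx_eq] at hx0
    exact pos_of_mul_pos_right hx0 (by positivity)
  have hlog : log x = 2 * log ((β + α) / 2) + log (1 + 2 * r * c + r ^ 2) := by
    rw [hx_eq, log_mul (pow_pos (half_pos hs) 2).ne' hpos.ne', log_pow, Nat.cast_ofNat]
  rw [eval_add, eval_C, eval_comp, hlog, add_sub_add_left_eq_sub]
  exact hP c hc

/-- Best polynomial approximation of the logarithm:
`E_n[ln x; [a,b]] ≤ C · W(b/(a n²))` for a universal constant `C`. -/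
theorem log_best_approx_bound :
    ∃ C : ℝ, 0 < C ∧
      ∀ (a b : ℝ) (n : ℕ), 0 < a → a < b → 1 ≤ n →
        bestApproxErr n Real.log a b ≤ C * Wfun (b / (a * (n : ℝ) ^ 2)) := by
  refine ⟨7, by norm_num, fun a b n ha hab hn => ?_⟩
  have hb : 0 < b := ha.trans hab
  set α := √a
  set β := √b
  have hα : 0 < α := sqrt_pos.2 ha
  have hαβ : α < β := sqrt_lt_sqrt ha.le hab
  obtain ⟨P, hPdeg, hP⟩ := exists_poly_log_le_logTail hα hαβ n
  rw [sq_sqrt ha.le, sq_sqrt hb.le] at hP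
  refine (bestApproxErr_le_of_abs_sub_le hab.le hPdeg hP).trans ?_
  have hq : 1 ≤ β / (α * n) * (n * (1 - (β - α) / (β + α))) := by
    have hs : 0 < β + α := by linarith
    have h1r : 1 - (β - α) / (β + α) = 2 * α / (β + α) := by field_simp [hs.ne']; ring
    rw [h1r, show β / (α * n) * (n * (2 * α / (β + α))) = 2 * β / (β + α) by field_simp,
      one_le_div (by linarith)]
    linarith
  have hq2 : (β / (α * n)) ^ 2 = b / (a * n ^ 2) := by
    rw [div_pow, mul_pow, sq_sqrt ha.le, sq_sqrt hb.le]
  rw [← hq2]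
  exact two_mul_logTail_succ_le_Wfun (div_nonneg (by linarith) (by linarith))
    ((div_lt_one (by linarith)).2 (by linarith)) hn hq

end
end

section
/- Let n ≥ 0 be an integer, let a < b be reals with a + b ≠ 0, let A > 0, and let p(x) = Σ_{ν=0}^{n} a_ν·x^ν be a real polynomial of degree at most n with |p(x)| ≤ A for all x ∈ [a,b]. Then for every ν ∈ {0, 1, …, n}, |a_ν| ≤ 2^{7n/2}·A·|(a+b)/2|^{−ν}·(|(b+a)/(b−a)|^n + 1). -/
/-!
Interpolate `p` at the `n + 1` equally spaced nodes `xᵢ = a + i (b - a) / n`. Lagrange's formula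
gives `a_ν = ∑ⱼ p(xⱼ) wⱼ [X^ν] ∏_{i ≠ j} (X - xᵢ)` with barycentric weights satisfying
`∑ⱼ |wⱼ| = (2n / (b - a))ⁿ / n!`. All nodes lie in `[-M, M]` for `M = |(a + b) / 2| + (b - a) / 2`,
so by Vieta `|[X^ν] ∏_{i ≠ j} (X - xᵢ)| ≤ C(n, ν) M^(n-ν)`; multiplying by `|(a + b) / 2|^ν ≤ M^ν`
leaves `A C(n, ν) (n (u + 1))ⁿ / n!` with `u = |(b + a) / (b - a)|`, and `nⁿ / n! ≤ eⁿ`,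
`(u + 1)ⁿ ≤ 2ⁿ (uⁿ + 1)`, `4e ≤ 2^(7/2)` give the constant.
-/

open Polynomial Finset Lagrange
open scoped Nat

theorem Finset.abs_esymm_map_val_le {ι : Type*} (s : Finset ι) (f : ι → ℝ) {M : ℝ}
    (hf : ∀ i ∈ s, |f i| ≤ M) (k : ℕ) :
    |(s.val.map f).esymm k| ≤ (#s).choose k * M ^ k := by
  rw [esymm_map_val]
  calc |∑ t ∈ s.powersetCard k, ∏ i ∈ t, f i|
      ≤ ∑ t ∈ s.powersetCard k, ∏ i ∈ t, |f i| := by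
        simpa only [abs_prod] using abs_sum_le_sum_abs (fun t => ∏ i ∈ t, f i) _
    _ ≤ ∑ t ∈ s.powersetCard k, M ^ k := by
        refine sum_le_sum fun t ht => ?_
        obtain ⟨hts, rfl⟩ := mem_powersetCard.mp ht
        simpa using prod_le_prod (fun i _ => abs_nonneg (f i)) fun i hi => hf i (hts hi)
    _ = (#s).choose k * M ^ k := by rw [sum_const, card_powersetCard, nsmul_eq_mul]

theorem Lagrange.abs_coeff_nodal_le {ι : Type*} (s : Finset ι) (v : ι → ℝ) {M : ℝ}
    (hv : ∀ i ∈ s, |v i| ≤ M) (k : ℕ) :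
    |(nodal s v).coeff k| ≤ (#s).choose k * M ^ (#s - k) := by
  rcases le_or_gt k #s with hk | hk
  · have hnodal : nodal s v = ((s.val.map v).map fun t => X - C t).prod := by
      rw [nodal_eq, Multiset.map_map]; rfl
    rw [hnodal, Multiset.prod_X_sub_C_coeff _ (by simpa using hk), abs_mul, abs_pow, abs_neg,
      abs_one, one_pow, one_mul, ← Nat.choose_symm hk]
    simpa using abs_esymm_map_val_le s v hv (#s - k)
  · rw [coeff_eq_zero_of_natDegree_lt (by rwa [natDegree_nodal]), Nat.choose_eq_zero_of_lt hk]
    simp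

theorem Lagrange.coeff_basis {F ι : Type*} [Field F] [DecidableEq ι] {s : Finset ι} {v : ι → F}
    {i : ι} (hi : i ∈ s) (k : ℕ) :
    (Lagrange.basis s v i).coeff k = nodalWeight s v i * (nodal (s.erase i) v).coeff k := by
  rw [basis_eq_prod_sub_inv_mul_nodal_div hi, ← nodal_erase_eq_nodal_div hi, coeff_C_mul]

theorem Lagrange.abs_coeff_le_of_abs_eval_le {ι : Type*} [DecidableEq ι] {s : Finset ι}
    {v : ι → ℝ} (hvs : Set.InjOn v s) {p : ℝ[X]} (hp : p.degree < #s) {A M : ℝ}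
    (hA : ∀ i ∈ s, |p.eval (v i)| ≤ A) (hM : ∀ i ∈ s, |v i| ≤ M) (k : ℕ) :
    |p.coeff k| ≤ A * (#s - 1).choose k * M ^ (#s - 1 - k) * ∑ i ∈ s, |nodalWeight s v i| := by
  have hcoeff : p.coeff k =
      ∑ i ∈ s, p.eval (v i) * (nodalWeight s v i * (nodal (s.erase i) v).coeff k) := by
    conv_lhs => rw [eq_interpolate hvs hp]
    rw [interpolate_apply, finsetSum_coeff]
    exact sum_congr rfl fun i hi => by rw [coeff_C_mul, coeff_basis hi]
  rw [hcoeff, mul_sum]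
  refine (abs_sum_le_sum_abs _ _).trans (sum_le_sum fun i hi => ?_)
  have hnodal := abs_coeff_nodal_le (s.erase i) v (fun j hj => hM j (mem_of_mem_erase hj)) k
  rw [card_erase_of_mem hi] at hnodal
  have hA₀ : 0 ≤ A := (abs_nonneg _).trans (hA i hi)
  rw [abs_mul, abs_mul]
  calc |p.eval (v i)| * (|nodalWeight s v i| * |(nodal (s.erase i) v).coeff k|)
      ≤ A * (|nodalWeight s v i| * ((#s - 1).choose k * M ^ (#s - 1 - k))) := by
        gcongr
        exact hA i hi
    _ = _ := by ring

theorem prod_abs_natCast_sub_erase_range {n j : ℕ} (hj : j ≤ n) :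
    ∏ i ∈ (range (n + 1)).erase j, |(j : ℝ) - i| = j ! * (n - j)! := by
  have hsplit : (range (n + 1)).erase j = range j ∪ Ico (j + 1) (n + 1) := by
    ext i; simp only [mem_erase, mem_range, mem_union, mem_Ico]; omega
  have hdisj : Disjoint (range j) (Ico (j + 1) (n + 1)) :=
    disjoint_left.mpr fun i hi hi' => by simp only [mem_range, mem_Ico] at hi hi'; omega
  have hbelow : ∏ i ∈ range j, |(j : ℝ) - i| = j ! := by
    rw [← Nat.descFactorial_self, Nat.descFactorial_eq_prod_range, Nat.cast_prod]
    refine prod_congr rfl fun i hi => ?_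
    rw [Nat.cast_sub (mem_range.mp hi).le, abs_of_nonneg (by simpa using (mem_range.mp hi).le)]
  have habove : ∏ i ∈ Ico (j + 1) (n + 1), |(j : ℝ) - i| = (n - j)! := by
    rw [prod_Ico_eq_prod_range, ← prod_range_add_one_eq_factorial, Nat.cast_prod,
      show n + 1 - (j + 1) = n - j by omega]
    refine prod_congr rfl fun i _ => ?_
    rw [abs_sub_comm, abs_of_nonneg (by push_cast; linarith)]
    push_cast; ring
  rw [hsplit, prod_union hdisj, hbelow, habove]

theorem Lagrange.abs_nodalWeight_range_affine {n j : ℕ} (hj : j ≤ n) (a h : ℝ) :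
    |nodalWeight (range (n + 1)) (fun i : ℕ => a + i * h) j| = (|h| ^ n * j ! * (n - j)!)⁻¹ := by
  have hcard : #((range (n + 1)).erase j) = n := by
    rw [card_erase_of_mem (mem_range.mpr (by omega)), card_range, Nat.add_sub_cancel]
  rw [nodalWeight, abs_prod]
  simp_rw [abs_inv, add_sub_add_left_eq_sub, ← sub_mul, abs_mul]
  rw [prod_inv_distrib, prod_mul_distrib, prod_const, hcard,
    prod_abs_natCast_sub_erase_range hj]
  ring

theorem Lagrange.sum_abs_nodalWeight_range_affine (n : ℕ) (a h : ℝ) :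
    ∑ j ∈ range (n + 1), |nodalWeight (range (n + 1)) (fun i : ℕ => a + i * h) j| =
      (2 / |h|) ^ n / n ! := by
  have hterm : ∀ j ∈ range (n + 1),
      |nodalWeight (range (n + 1)) (fun i : ℕ => a + i * h) j| = n.choose j / (|h| ^ n * n !) := by
    intro j hj
    have hj : j ≤ n := Nat.lt_succ_iff.mp (mem_range.mp hj)
    rw [abs_nodalWeight_range_affine hj, Nat.cast_choose ℝ hj]
    field_simp
  rw [sum_congr rfl hterm, ← sum_div, ← Nat.cast_sum, Nat.sum_range_choose, div_pow]
  push_cast; ring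

theorem four_mul_exp_one_le_two_rpow : 4 * Real.exp 1 ≤ 2 ^ (7 / 2 : ℝ) := by
  rw [show (7 / 2 : ℝ) = 7 * (1 / 2) by norm_num, Real.rpow_mul (by norm_num), ← Real.sqrt_eq_rpow,
    Real.le_sqrt (by positivity) (by positivity)]
  nlinarith [Real.exp_one_lt_d9, Real.exp_pos 1]

theorem choose_mul_pow_div_factorial_le (n k : ℕ) {u : ℝ} (hu : 0 ≤ u) :
    n.choose k * (n * (u + 1)) ^ n / n ! ≤ 2 ^ ((7 * (n : ℝ)) / 2) * (u ^ n + 1) := by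
  have hchoose : (n.choose k : ℝ) ≤ 2 ^ n := by exact_mod_cast Nat.choose_le_two_pow n k
  have hfact : (n : ℝ) ^ n / n ! ≤ Real.exp 1 ^ n := by
    rw [← Real.exp_nat_mul, mul_one]; exact Real.pow_div_factorial_le_exp _ n.cast_nonneg n
  have hpow : (u + 1) ^ n ≤ 2 ^ n * (u ^ n + 1) := by
    calc (u + 1) ^ n ≤ 2 ^ (n - 1) * (u ^ n + 1 ^ n) := add_pow_le hu zero_le_one n
      _ ≤ 2 ^ n * (u ^ n + 1) := by
        rw [one_pow]; gcongr
        · norm_num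
        · omega
  calc n.choose k * (n * (u + 1)) ^ n / n ! = n.choose k * (n ^ n / n !) * (u + 1) ^ n := by
        rw [mul_pow]; ring
    _ ≤ 2 ^ n * Real.exp 1 ^ n * (2 ^ n * (u ^ n + 1)) := by gcongr
    _ = (4 * Real.exp 1) ^ n * (u ^ n + 1) := by
        rw [mul_pow, show (4 : ℝ) = 2 * 2 by norm_num, mul_pow]; ring
    _ ≤ (2 ^ (7 / 2 : ℝ)) ^ n * (u ^ n + 1) := by gcongr; exact four_mul_exp_one_le_two_rpow
    _ = 2 ^ ((7 * (n : ℝ)) / 2) * (u ^ n + 1) := by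
        rw [← Real.rpow_natCast, ← Real.rpow_mul (by norm_num)]; ring_nf

theorem abs_coeff_mul_pow_le_of_abs_eval_le_on_Icc {n k : ℕ} (hk : k ≤ n) {a b A M : ℝ}
    (hab : a < b) {p : ℝ[X]} (hdeg : p.degree ≤ n) (hp : ∀ x ∈ Set.Icc a b, |p.eval x| ≤ A)
    (hM : ∀ x ∈ Set.Icc a b, |x| ≤ M) :
    |p.coeff k| * M ^ k ≤ A * n.choose k * (2 * n * M / (b - a)) ^ n / n ! := by
  set h := (b - a) / n with hh
  set v : ℕ → ℝ := fun i => a + i * h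
  have hv : ∀ i ∈ range (n + 1), v i ∈ Set.Icc a b := by
    intro i hi
    have hi₀ : 0 ≤ (i : ℝ) / n := by positivity
    have hi₁ : (i : ℝ) / n ≤ 1 :=
      div_le_one_of_le₀ (by exact_mod_cast Nat.lt_succ_iff.mp (mem_range.mp hi)) n.cast_nonneg
    have hvi : v i = a + i / n * (b - a) := by simp only [v, hh]; ring
    rw [hvi]
    constructor <;> nlinarith
  have hinj : Set.InjOn v (range (n + 1)) := by
    intro i hi j hj hij
    -- for `n = 0` the step `h` is the junk value `0`, but there is only one node
    rcases Nat.eq_zero_or_pos n with rfl | hn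
    · simp_all
    · have hh₀ : h ≠ 0 := div_ne_zero (sub_ne_zero.mpr hab.ne') (by positivity)
      simpa [v, hh₀] using hij
  have hdeg' : p.degree < #(range (n + 1)) := by
    rw [card_range]; exact hdeg.trans_lt (by exact_mod_cast Nat.lt_succ_self n)
  have hcoeff := abs_coeff_le_of_abs_eval_le hinj hdeg' (fun i hi => hp _ (hv i hi))
    (fun i hi => hM _ (hv i hi)) k
  have hh₀ : 0 ≤ h := div_nonneg (sub_nonneg.mpr hab.le) n.cast_nonneg
  rw [card_range, Nat.add_sub_cancel, sum_abs_nodalWeight_range_affine, abs_of_nonneg hh₀]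
    at hcoeff
  have hM₀ : 0 ≤ M := (abs_nonneg a).trans (hM a ⟨le_rfl, hab.le⟩)
  calc |p.coeff k| * M ^ k
      ≤ A * n.choose k * M ^ (n - k) * ((2 / h) ^ n / n !) * M ^ k := by gcongr
    _ = A * n.choose k * (M ^ (n - k) * M ^ k) * (2 / h) ^ n / n ! := by ring
    _ = A * n.choose k * (2 * n * M / (b - a)) ^ n / n ! := by
        rw [pow_sub_mul_pow M hk, hh, div_div_eq_mul_div]
        ring

theorem poly_coeff_bound_general (n : ℕ) (a b A : ℝ) (hab : a < b) (hne : a + b ≠ 0)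
    (p : Polynomial ℝ) (hdeg : p.degree ≤ n)
    (hbd : ∀ x ∈ Set.Icc a b, |p.eval x| ≤ A) :
    ∀ ν : ℕ, ν ≤ n →
      |p.coeff ν| ≤ (2 : ℝ) ^ ((7 * (n : ℝ)) / 2) * A * |(a + b) / 2| ^ (-(ν : ℤ)) *
        (|(b + a) / (b - a)| ^ n + 1) := by
  intro ν hν
  set K := |(a + b) / 2|
  set u := |(b + a) / (b - a)|
  have hK : 0 < K := abs_pos.mpr (div_ne_zero hne two_ne_zero)
  have hA : 0 ≤ A := (abs_nonneg _).trans (hbd a ⟨le_rfl, hab.le⟩)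
  have hM : ∀ x ∈ Set.Icc a b, |x| ≤ K + (b - a) / 2 := by
    rintro x ⟨hax, hxb⟩
    have := le_abs_self ((a + b) / 2)
    have := neg_abs_le ((a + b) / 2)
    rw [abs_le]; constructor <;> linarith
  have hscale : 2 * n * (K + (b - a) / 2) / (b - a) = n * (u + 1) := by
    have hba : 0 < b - a := sub_pos.mpr hab
    simp only [K, u, abs_div, abs_of_pos hba, abs_two, add_comm b a]
    field_simp
  have hscaled : |p.coeff ν| * K ^ ν ≤ A * (2 ^ ((7 * (n : ℝ)) / 2) * (u ^ n + 1)) :=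
    calc |p.coeff ν| * K ^ ν ≤ |p.coeff ν| * (K + (b - a) / 2) ^ ν := by gcongr; linarith
      _ ≤ A * (n.choose ν * (n * (u + 1)) ^ n / n !) := by
        rw [← hscale, ← mul_div_assoc, ← mul_assoc]
        exact abs_coeff_mul_pow_le_of_abs_eval_le_on_Icc hν hab hdeg hbd hM
      _ ≤ A * (2 ^ ((7 * (n : ℝ)) / 2) * (u ^ n + 1)) := by
        gcongr; exact choose_mul_pow_div_factorial_le n ν (abs_nonneg _)
  calc |p.coeff ν| = |p.coeff ν| * K ^ ν * (K ^ ν)⁻¹ := by field_simp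
    _ ≤ A * (2 ^ ((7 * (n : ℝ)) / 2) * (u ^ n + 1)) * (K ^ ν)⁻¹ := by gcongr
    _ = _ := by rw [zpow_neg, zpow_natCast]; ring

/-- Coefficient bound for polynomials bounded on an interval `[a,b]` not centered at the
origin: if `deg p ≤ n` and `|p(x)| ≤ A` on `[a,b]` with `a + b ≠ 0`, then for every
`ν ≤ n`, `|a_ν| ≤ 2^{7n/2} A |(a+b)/2|^{−ν} (|(b+a)/(b−a)|ⁿ + 1)`. -/
theorem poly_coeff_bound (n : ℕ) (a b A : ℝ) (hab : a < b) (hne : a + b ≠ 0) (hA : 0 < A)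
    (p : Polynomial ℝ) (hdeg : p.degree ≤ n)
    (hbd : ∀ x ∈ Set.Icc a b, |p.eval x| ≤ A) :
    ∀ ν : ℕ, ν ≤ n →
      |p.coeff ν| ≤ (2 : ℝ) ^ ((7 * (n : ℝ)) / 2) * A * |(a + b) / 2| ^ (-(ν : ℤ)) *
        (|(b + a) / (b - a)| ^ n + 1) :=
  poly_coeff_bound_general n a b A hab hne p hdeg hbd
end
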